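/- Van der Waerden splitting: let ω have positive real part, α with Re α > 0, and f analytic in a horizontal strip |Im t| ≤ a containing iα, with suitable decay at real infinity. Then (1/(2πi)) ∫_{-∞}^∞ e^{-ω t²} f(t)/(t − iα) dt = (1/2) f(iα) e^{ω α²} erfc(α√ω) + (1/(2πi)) ∫_{-∞}^∞ e^{-ω t²} g(t) dt, where g(t) = (f(t) − f(iα))/(t − iα). -/

import Mathlib

/-!
Writing `f t = (f t - f (iα)) + f (iα)` reduces the identity to the evaluation
`∫ e^{-ωt²} / (t - iα) dt = π i e^{ωα²} erfc (α √ω)`.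
For real `ω = x > 0` this follows from `1 / (t - iα) = i ∫₀^∞ e^{-(α + it) s} ds`, Fubini and
the Fourier transform of the Gaussian, which leave `∫₀^∞ e^{-αs - s²/(4x)} ds`; the substitution
`s = 2 √x u` completes the square into the erfc integral. Both sides are holomorphic in `ω` on
`Re ω > 0`, so the identity theorem extends the evaluation from the positive reals.
-/

open MeasureTheory Real

/-- The complementary error function `erfc z = (2/√π) ∫_z^∞ e^{-t²} dt`, the integral
taken along the horizontal ray from `z` to `z + ∞`. -/
noncomputable def cerfc (z : ℂ) : ℂ :=
  (2 / (Real.sqrt π : ℂ)) * ∫ s in Set.Ioi (0:ℝ), Complex.exp (-(z + (s : ℂ)) ^ 2)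

open Set Filter Complex Topology

theorem eqOn_re_pos_of_eq_on_pos_real {f g : ℂ → ℂ} (hf : DifferentiableOn ℂ f {z | 0 < z.re})
    (hg : DifferentiableOn ℂ g {z | 0 < z.re}) (hfg : ∀ x : ℝ, 0 < x → f x = g x) :
    EqOn f g {z | 0 < z.re} := by
  have hU : IsOpen {z : ℂ | 0 < z.re} := isOpen_lt continuous_const continuous_re
  have hmap : Tendsto ofReal (𝓝[≠] 1) (𝓝[≠] (1 : ℂ)) :=
    tendsto_nhdsWithin_of_tendsto_nhds_of_eventually_within _
      ((continuous_ofReal.tendsto' 1 1 ofReal_one).mono_left nhdsWithin_le_nhds)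
      (eventually_nhdsWithin_of_forall fun x hx => by simpa using hx)
  have hpos : ∀ᶠ x : ℝ in 𝓝[≠] 1, 0 < x :=
    eventually_nhdsWithin_of_eventually_nhds (lt_mem_nhds one_pos)
  refine (hf.analyticOnNhd hU).eqOn_of_preconnected_of_frequently_eq (hg.analyticOnNhd hU)
    (convex_halfSpace_re_gt 0).isPreconnected (by simp : (1 : ℂ) ∈ {z : ℂ | 0 < z.re}) ?_
  exact hmap.frequently (hpos.mono fun x hx => hfg x hx).frequently

theorem norm_cexp_neg_mul_sq' (ω : ℂ) (t : ℝ) :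
    ‖cexp (-(ω * t ^ 2))‖ = rexp (-ω.re * t ^ 2) := by
  rw [← neg_mul, norm_cexp_neg_mul_sq]

theorem integrable_cexp_neg_mul_sq_mul {h : ℝ → ℂ} {C : ℝ} (hm : AEStronglyMeasurable h)
    (hC : ∀ t, ‖h t‖ ≤ C) {ω : ℂ} (hω : 0 < ω.re) :
    Integrable fun t : ℝ => cexp (-(ω * t ^ 2)) * h t := by
  refine Integrable.mono' ((integrable_exp_neg_mul_sq hω).mul_const C)
    ((by fun_prop : Continuous fun t : ℝ => cexp (-(ω * t ^ 2))).aestronglyMeasurable.mul hm)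
    (Eventually.of_forall fun t => ?_)
  rw [norm_mul, norm_cexp_neg_mul_sq']
  exact mul_le_mul_of_nonneg_left (hC t) (Real.exp_pos _).le

theorem differentiableOn_integral_cexp_neg_mul_sq_mul {h : ℝ → ℂ} {C : ℝ}
    (hm : AEStronglyMeasurable h) (hC : ∀ t, ‖h t‖ ≤ C) :
    DifferentiableOn ℂ (fun ω => ∫ t : ℝ, cexp (-(ω * t ^ 2)) * h t) {ω | 0 < ω.re} := by
  intro ω₀ hω₀
  refine DifferentiableAt.differentiableWithinAt ?_
  set δ := ω₀.re / 2 with hδ_def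
  have hδ : 0 < δ := half_pos hω₀
  have hball : ∀ ω ∈ Metric.ball ω₀ δ, δ ≤ ω.re := fun ω hω => by
    have := (abs_le.mp ((abs_re_le_norm (ω - ω₀)).trans (mem_ball_iff_norm.mp hω).le)).1
    simp only [sub_re] at this
    linarith [show 0 < ω₀.re from hω₀]
  have hbound_int : Integrable (fun t : ℝ => C * (t ^ 2 * rexp (-δ * t ^ 2))) := by
    refine Integrable.const_mul ?_ C
    simpa only [Real.rpow_two] using integrable_rpow_mul_exp_neg_mul_sq hδ (s := 2) (by norm_num)
  refine (hasDerivAt_integral_of_dominated_loc_of_deriv_le (Metric.ball_mem_nhds ω₀ hδ)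
    (F' := fun ω t => -(t : ℂ) ^ 2 * cexp (-(ω * t ^ 2)) * h t)
    (Eventually.of_forall fun ω => ((by fun_prop : Continuous fun t : ℝ => cexp (-(ω * t ^ 2))
      ).aestronglyMeasurable.mul hm)) (integrable_cexp_neg_mul_sq_mul hm hC hω₀) ?_ ?_ hbound_int
    ?_).2.differentiableAt
  · exact ((by fun_prop : Continuous fun t : ℝ => -(t : ℂ) ^ 2 * cexp (-(ω₀ * t ^ 2))
      ).aestronglyMeasurable.mul hm)
  · refine Eventually.of_forall fun t ω hω => ?_
    have hexp : rexp (-ω.re * t ^ 2) ≤ rexp (-δ * t ^ 2) :=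
      Real.exp_le_exp.mpr (by nlinarith [hball ω hω, sq_nonneg t])
    rw [norm_mul, norm_mul, norm_cexp_neg_mul_sq', norm_neg, norm_pow, norm_real,
      Real.norm_eq_abs, sq_abs]
    calc t ^ 2 * rexp (-ω.re * t ^ 2) * ‖h t‖ ≤ t ^ 2 * rexp (-δ * t ^ 2) * C := by
          gcongr; exact hC t
      _ = C * (t ^ 2 * rexp (-δ * t ^ 2)) := by ring
  · refine Eventually.of_forall fun t ω _ => ?_
    simpa [mul_comm] using (((hasDerivAt_id ω).mul_const ((t : ℂ) ^ 2)).neg.cexp).mul_const (h t)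

theorem norm_cexp_neg_add_ofReal_sq (z : ℂ) (s : ℝ) :
    ‖cexp (-(z + s) ^ 2)‖ = rexp (z.im ^ 2 - (z.re + s) ^ 2) := by
  rw [norm_exp]
  congr 1
  simp only [sq, neg_re, mul_re, add_re, add_im, ofReal_re, ofReal_im]
  ring

/-- From `(x + s)² ≥ s² / 2 - x²` with `x = z.re`. -/
theorem norm_cexp_neg_add_ofReal_sq_le {z : ℂ} {M : ℝ} (hz : ‖z‖ ≤ M) (s : ℝ) :
    ‖cexp (-(z + s) ^ 2)‖ ≤ rexp (2 * M ^ 2) * rexp (-(1 / 2) * s ^ 2) := by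
  have hre := abs_le.mp ((abs_re_le_norm z).trans hz)
  have him := abs_le.mp ((abs_im_le_norm z).trans hz)
  rw [norm_cexp_neg_add_ofReal_sq, ← Real.exp_add]
  exact Real.exp_le_exp.mpr (by nlinarith [sq_nonneg (s + 2 * z.re)])

theorem differentiable_cerfc : Differentiable ℂ cerfc := by
  intro z₀
  set M := ‖z₀‖ + 1
  have hball : ∀ z ∈ Metric.ball z₀ 1, ‖z‖ ≤ M := fun z hz => by
    have := norm_le_norm_add_norm_sub' z z₀
    have := (mem_ball_iff_norm.mp hz).le
    linarith
  have hF_cont : ∀ z : ℂ, Continuous fun s : ℝ => cexp (-(z + s) ^ 2) := fun z => by fun_prop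
  have hbound_int : Integrable
      (fun s : ℝ => 2 * rexp (2 * M ^ 2) * ((M + |s|) * rexp (-(1 / 2) * s ^ 2)))
      (volume.restrict (Ioi 0)) := by
    refine (Integrable.const_mul ?_ _).integrableOn
    refine ((integrable_exp_neg_mul_sq (b := 1 / 2) (by norm_num)).const_mul M).add
      (integrable_mul_exp_neg_mul_sq (b := 1 / 2) (by norm_num)).abs |>.congr ?_
    refine Eventually.of_forall fun s => ?_
    simp only [Pi.add_apply, abs_mul, abs_of_pos (Real.exp_pos _)]
    ring
  have hderiv := hasDerivAt_integral_of_dominated_loc_of_deriv_le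
    (μ := volume.restrict (Ioi 0)) (Metric.ball_mem_nhds z₀ one_pos)
    (F' := fun z (s : ℝ) => -(2 * (z + s)) * cexp (-(z + s) ^ 2))
    (Eventually.of_forall fun z => (hF_cont z).aestronglyMeasurable)
    ?_ ?_ ?_ hbound_int ?_
  · exact hderiv.2.differentiableAt.const_mul _
  · exact (integrable_cexp_quadratic (b := 1) one_pos (-2 * z₀) (-z₀ ^ 2)).integrableOn
      |>.congr_fun (fun s _ => by ring_nf) measurableSet_Ioi
  · exact (by fun_prop : Continuous fun s : ℝ => -(2 * (z₀ + s)) * cexp (-(z₀ + s) ^ 2)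
      ).aestronglyMeasurable
  · refine Eventually.of_forall fun s z hz => ?_
    have hlin : ‖-(2 * (z + s))‖ ≤ 2 * (M + |s|) := by
      rw [norm_neg, norm_mul, Complex.norm_two]
      have := norm_add_le z (s : ℂ)
      rw [norm_real, Real.norm_eq_abs] at this
      linarith [hball z hz]
    calc ‖-(2 * (z + s)) * cexp (-(z + s) ^ 2)‖
        ≤ 2 * (M + |s|) * (rexp (2 * M ^ 2) * rexp (-(1 / 2) * s ^ 2)) := by
          rw [norm_mul]
          exact mul_le_mul hlin (norm_cexp_neg_add_ofReal_sq_le (hball z hz) s) (norm_nonneg _)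
            (by positivity)
      _ = _ := by ring
  · refine Eventually.of_forall fun s z _ => ?_
    simpa [mul_comm] using (((hasDerivAt_id z).add_const (s : ℂ)).pow 2).neg.cexp

theorem ofReal_sub_I_mul_ne_zero {α : ℂ} (hα : 0 < α.re) (t : ℝ) :
    (t : ℂ) - I * α ≠ 0 :=
  fun h => by simpa [hα.ne'] using congrArg im h

theorem norm_inv_ofReal_sub_I_mul_le {α : ℂ} (hα : 0 < α.re) (t : ℝ) :
    ‖((t : ℂ) - I * α)⁻¹‖ ≤ α.re⁻¹ := by
  rw [norm_inv]
  refine inv_anti₀ hα ((le_of_eq ?_).trans (abs_im_le_norm _))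
  simp [abs_of_pos hα]

theorem inv_ofReal_sub_I_mul_eq_integral_Ioi {α : ℂ} (hα : 0 < α.re) (t : ℝ) :
    ((t : ℂ) - I * α)⁻¹ = I * ∫ s in Ioi (0 : ℝ), cexp (-(α + I * t) * s) := by
  have hre : (-(α + I * t)).re < 0 := by simpa using hα
  have hne : α + I * t ≠ 0 := fun h => by simp [h] at hre
  rw [integral_exp_mul_complex_Ioi hre, ofReal_zero, mul_zero, Complex.exp_zero,
    neg_div_neg_eq, mul_one_div, eq_comm]
  refine eq_inv_of_mul_eq_one_left ?_
  rw [div_mul_eq_mul_div, div_eq_one_iff_eq hne]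
  linear_combination (-α) * I_sq

theorem integral_cexp_neg_mul_sq_mul_cexp {ω : ℂ} (hω : 0 < ω.re) (α : ℂ) (s : ℝ) :
    ∫ t : ℝ, cexp (-(ω * t ^ 2)) * cexp (-(α + I * t) * s) =
      (π / ω) ^ (1 / 2 : ℂ) * cexp (-(α * s) - s ^ 2 / (4 * ω)) := by
  have hsplit : ∀ t : ℝ, cexp (-(ω * t ^ 2)) * cexp (-(α + I * t) * s) =
      cexp (-(α * s)) * (cexp (I * (-s : ℂ) * t) * cexp (-ω * t ^ 2)) := fun t => by
    simp only [← Complex.exp_add]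
    ring_nf
  simp_rw [hsplit]
  rw [integral_const_mul, fourierIntegral_gaussian hω, sub_eq_add_neg, Complex.exp_add]
  ring_nf

theorem integrable_cexp_neg_mul_sq_mul_cexp_prod {ω α : ℂ} (hω : 0 < ω.re) (hα : 0 < α.re) :
    Integrable (fun p : ℝ × ℝ => I * (cexp (-(ω * p.1 ^ 2)) * cexp (-(α + I * p.1) * p.2)))
      (volume.prod (volume.restrict (Ioi 0))) := by
  refine Integrable.mono'
    ((integrable_exp_neg_mul_sq hω).mul_prod (exp_neg_integrableOn_Ioi 0 hα))
    (by fun_prop : Continuous _).aestronglyMeasurable (Eventually.of_forall fun p => ?_)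
  have hnorm : ‖cexp (-(α + I * p.1) * p.2)‖ = rexp (-α.re * p.2) := by
    rw [norm_exp]
    simp
  rw [norm_mul, norm_mul, norm_I, one_mul, norm_cexp_neg_mul_sq', hnorm]

theorem integral_gaussian_div_sub_I_mul_eq_integral_Ioi {ω α : ℂ} (hω : 0 < ω.re)
    (hα : 0 < α.re) :
    ∫ t : ℝ, cexp (-(ω * t ^ 2)) / ((t : ℂ) - I * α) =
      I * (π / ω) ^ (1 / 2 : ℂ) * ∫ s in Ioi (0 : ℝ), cexp (-(α * s) - s ^ 2 / (4 * ω)) := by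
  calc ∫ t : ℝ, cexp (-(ω * t ^ 2)) / ((t : ℂ) - I * α)
      = ∫ t : ℝ, ∫ s in Ioi (0 : ℝ), I * (cexp (-(ω * t ^ 2)) * cexp (-(α + I * t) * s)) := by
        refine integral_congr_ae (Eventually.of_forall fun t => ?_)
        simp only [div_eq_mul_inv, inv_ofReal_sub_I_mul_eq_integral_Ioi hα, integral_const_mul]
        ring
    _ = ∫ s in Ioi (0 : ℝ), ∫ t : ℝ, I * (cexp (-(ω * t ^ 2)) * cexp (-(α + I * t) * s)) :=
        integral_integral_swap (integrable_cexp_neg_mul_sq_mul_cexp_prod hω hα)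
    _ = _ := by
        simp only [integral_const_mul, integral_cexp_neg_mul_sq_mul_cexp hω]
        ring

theorem ofReal_cpow_one_half {x : ℝ} (hx : 0 ≤ x) :
    (x : ℂ) ^ (1 / 2 : ℂ) = Real.sqrt x := by
  rw [Real.sqrt_eq_rpow, ofReal_cpow hx]
  norm_num

theorem integral_Ioi_cexp_neg_mul_sub_sq_div (α : ℂ) {r : ℝ} (hr : 0 < r) :
    ∫ s in Ioi (0 : ℝ), cexp (-(α * s) - s ^ 2 / (4 * (r : ℂ) ^ 2)) =
      r * Real.sqrt π * cexp (r ^ 2 * α ^ 2) * cerfc (α * r) := by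
  have hr' : (r : ℂ) ≠ 0 := ofReal_ne_zero.mpr hr.ne'
  have hsqrtπ : (Real.sqrt π : ℂ) ≠ 0 := ofReal_ne_zero.mpr (Real.sqrt_pos.mpr pi_pos).ne'
  have hscale := integral_comp_mul_left_Ioi'
    (fun s : ℝ => cexp (-(α * s) - s ^ 2 / (4 * (r : ℂ) ^ 2))) 0 (by positivity : 0 < 2 * r)
  have hcomplete : ∀ u : ℝ,
      cexp (-(α * ↑(2 * r * u)) - ↑(2 * r * u) ^ 2 / (4 * (r : ℂ) ^ 2)) =
      cexp (r ^ 2 * α ^ 2) * cexp (-(α * r + u) ^ 2) := fun u => by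
    rw [← Complex.exp_add]
    congr 1
    push_cast
    field_simp
    ring
  rw [mul_zero] at hscale
  rw [← hscale, cerfc]
  simp only [hcomplete, integral_const_mul, real_smul]
  push_cast
  field_simp

theorem integral_gaussian_div_sub_I_mul_eq_cerfc_of_pos {α : ℂ} (hα : 0 < α.re) {x : ℝ}
    (hx : 0 < x) :
    ∫ t : ℝ, cexp (-(x * t ^ 2)) / ((t : ℂ) - I * α) =
      π * I * cexp (x * α ^ 2) * cerfc (α * (x : ℂ) ^ (1 / 2 : ℂ)) := by
  set r := Real.sqrt x
  have hr : 0 < r := Real.sqrt_pos.mpr hx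
  have hxr : (x : ℂ) = (r : ℂ) ^ 2 := by rw [← ofReal_pow, Real.sq_sqrt hx.le]
  have hπx : (π / x : ℂ) ^ (1 / 2 : ℂ) = Real.sqrt π / r := by
    rw [← ofReal_div, ofReal_cpow_one_half (by positivity), Real.sqrt_div' _ hx.le, ofReal_div]
  have hr' : (r : ℂ) ≠ 0 := ofReal_ne_zero.mpr hr.ne'
  have hππ : (Real.sqrt π : ℂ) ^ 2 = π := by rw [← ofReal_pow, Real.sq_sqrt pi_pos.le]
  rw [integral_gaussian_div_sub_I_mul_eq_integral_Ioi (by simpa using hx) hα, hπx,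
    show (x : ℂ) ^ (1 / 2 : ℂ) = r from ofReal_cpow_one_half hx.le, hxr,
    integral_Ioi_cexp_neg_mul_sub_sq_div α hr, ← hππ]
  field_simp

theorem integral_gaussian_div_sub_I_mul_eq_cerfc {ω α : ℂ} (hω : 0 < ω.re)
    (hα : 0 < α.re) :
    ∫ t : ℝ, cexp (-(ω * t ^ 2)) / ((t : ℂ) - I * α) =
      π * I * cexp (ω * α ^ 2) * cerfc (α * ω ^ (1 / 2 : ℂ)) := by
  have hlhs := differentiableOn_integral_cexp_neg_mul_sq_mul (by fun_prop)
    (norm_inv_ofReal_sub_I_mul_le hα)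
  simp_rw [← div_eq_mul_inv] at hlhs
  have hrhs : DifferentiableOn ℂ (fun ω : ℂ => π * I * cexp (ω * α ^ 2) *
      cerfc (α * ω ^ (1 / 2 : ℂ))) {ω | 0 < ω.re} := fun ω hω =>
    ((differentiableAt_id.mul_const _).cexp.const_mul _ |>.mul
      (differentiable_cerfc.differentiableAt.comp ω
        ((differentiableAt_id.cpow_const (Or.inl hω)).const_mul α))).differentiableWithinAt
  exact eqOn_re_pos_of_eq_on_pos_real hlhs hrhs
    (fun x hx => integral_gaussian_div_sub_I_mul_eq_cerfc_of_pos hα hx) hω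

theorem van_der_waerden_splitting_general (ω α : ℂ) (hω : 0 < ω.re) (hα : 0 < α.re) (f : ℂ → ℂ)
    (h2 : Integrable (fun t : ℝ =>
      Complex.exp (-(ω * (t : ℂ) ^ 2)) *
        ((f t - f (Complex.I * α)) / ((t : ℂ) - Complex.I * α)))) :
    (1 / (2 * π * Complex.I)) *
        (∫ t : ℝ, Complex.exp (-(ω * (t : ℂ) ^ 2)) * f t / ((t : ℂ) - Complex.I * α)) =
      (1 / 2) * f (Complex.I * α) * Complex.exp (ω * α ^ 2) *
          cerfc (α * ω ^ ((1 : ℂ) / 2)) +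
        (1 / (2 * π * Complex.I)) *
          ∫ t : ℝ, Complex.exp (-(ω * (t : ℂ) ^ 2)) *
            ((f t - f (Complex.I * α)) / ((t : ℂ) - Complex.I * α)) := by
  set c := f (I * α)
  have hsplit : ∀ t : ℝ, cexp (-(ω * t ^ 2)) * f t / ((t : ℂ) - I * α) =
      cexp (-(ω * t ^ 2)) * ((f t - c) / ((t : ℂ) - I * α)) +
        c * (cexp (-(ω * t ^ 2)) / ((t : ℂ) - I * α)) := fun t => by
    field_simp [ofReal_sub_I_mul_ne_zero hα t]
    ring
  have hkernel : Integrable fun t : ℝ => cexp (-(ω * t ^ 2)) / ((t : ℂ) - I * α) := by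
    simpa only [div_eq_mul_inv] using
      integrable_cexp_neg_mul_sq_mul (by fun_prop) (norm_inv_ofReal_sub_I_mul_le hα) hω
  simp_rw [hsplit]
  rw [integral_add h2 (hkernel.const_mul c), integral_const_mul,
    integral_gaussian_div_sub_I_mul_eq_cerfc hω hα]
  field_simp [pi_ne_zero]
  ring

theorem van_der_waerden_splitting (ω α : ℂ) (a : ℝ) (hω : 0 < ω.re)
    (hα : 0 < α.re) (ha : α.re < a)
    (f : ℂ → ℂ) (hf : DifferentiableOn ℂ f {t : ℂ | |t.im| ≤ a})
    (h1 : Integrable (fun t : ℝ =>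
      Complex.exp (-(ω * (t : ℂ) ^ 2)) * f t / ((t : ℂ) - Complex.I * α)))
    (h2 : Integrable (fun t : ℝ =>
      Complex.exp (-(ω * (t : ℂ) ^ 2)) *
        ((f t - f (Complex.I * α)) / ((t : ℂ) - Complex.I * α)))) :
    (1 / (2 * π * Complex.I)) *
        (∫ t : ℝ, Complex.exp (-(ω * (t : ℂ) ^ 2)) * f t / ((t : ℂ) - Complex.I * α)) =
      (1 / 2) * f (Complex.I * α) * Complex.exp (ω * α ^ 2) *
          cerfc (α * ω ^ ((1 : ℂ) / 2)) +
        (1 / (2 * π * Complex.I)) *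
          ∫ t : ℝ, Complex.exp (-(ω * (t : ℂ) ^ 2)) *
            ((f t - f (Complex.I * α)) / ((t : ℂ) - Complex.I * α)) :=
  van_der_waerden_splitting_general ω α hω hα f h2
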